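/- For f ∈ F_II = {f ∈ C[0,D] : f > 0 on (0,D)} with ξ := inf_{x∈(0,D)} II(f)(x)^{-1} > 0, define g = f · II(f)^(p*-1), i.e., g(x) = ∫_x^D v̂(s)(∫_0^s f^(p-1) dμ)^(p*-1) ds. Then g is positive and strictly decreasing on (0,D), v(x)(−g'(x))^(p-1) = ∫_0^x f^(p-1) dμ, and I(g)(x)^{-1} ≥ ξ for all x ∈ (0,D). Hence sup_{f∈F_I} inf_x I(f)(x)^{-1} ≥ sup_{f∈F_II} inf_x II(f)(x)^{-1}. -/

import Mathlib

/-!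
Put `H(s) = v(s)^(1-p*) (∫_0^s f^(p-1) dμ)^(p*-1)`. Then `g` is the tail integral of the positive
continuous function `H`, so `g > 0` and `g' = -H < 0`. Since `(p-1)(p*-1) = 1`, raising `-g' = H`
to the power `p-1` gives `v (-g')^(p-1) = ∫_0^x f^(p-1) dμ`. The hypothesis `II(f)⁻¹ ≥ ξ` says
exactly that `g^(p-1) ≤ ξ⁻¹ f^(p-1)`; integrating this against `μ` over `(0,x)` bounds the numerator
of `I(g)(x)` by `ξ⁻¹` times its denominator.
-/

open MeasureTheory Set

namespace Real.HolderConjugate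

variable {p q : ℝ}

theorem sub_one_mul_sub_one (h : p.HolderConjugate q) : (p - 1) * (q - 1) = 1 := by
  linear_combination h.mul_eq_add

theorem mul_rpow_sub_one_eq (h : p.HolderConjugate q) {a b : ℝ} (ha : 0 < a) (hb : 0 < b) :
    a * (a ^ (1 - q) * b ^ (q - 1)) ^ (p - 1) = b := by
  have hpq := h.sub_one_mul_sub_one
  rw [Real.mul_rpow (by positivity) (by positivity), ← Real.rpow_mul ha.le, ← Real.rpow_mul hb.le,
    show (1 - q) * (p - 1) = -1 by linear_combination -hpq,
    show (q - 1) * (p - 1) = 1 by linear_combination hpq, Real.rpow_neg_one, Real.rpow_one]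
  field_simp

end Real.HolderConjugate

theorem le_inv_mul_rpow_of_le_inv {ξ a b p : ℝ} (hξ : 0 < ξ) (ha : 0 < a)
    (h : ξ ≤ (a ^ (1 - p) * b)⁻¹) : b ≤ ξ⁻¹ * a ^ (p - 1) := by
  have hle : a ^ (1 - p) * b ≤ ξ⁻¹ :=
    (le_inv_comm₀ hξ (inv_pos.mp (hξ.trans_le h))).mp h
  rw [show 1 - p = -(p - 1) by ring, Real.rpow_neg ha.le, inv_mul_le_iff₀ (by positivity)] at hle
  rwa [mul_comm] at hle

theorem setIntegral_Ioo_pos {f : ℝ → ℝ} {a b : ℝ} (hab : a < b) (hf : IntegrableOn f (Ioo a b))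
    (hpos : ∀ t ∈ Ioo a b, 0 < f t) : 0 < ∫ t in Ioo a b, f t := by
  rw [← integral_Ioc_eq_integral_Ioo, ← intervalIntegral.integral_of_le hab.le]
  exact intervalIntegral.intervalIntegral_pos_of_pos_on
    ((intervalIntegrable_iff_integrableOn_Ioo_of_le hab.le).2 hf) hpos hab

theorem hasDerivAt_setIntegral_Ioo_left {H : ℝ → ℝ} {a b x : ℝ} (hH : IntegrableOn H (Ioo a b))
    (hHc : ContinuousOn H (Ioo a b)) (hx : x ∈ Ioo a b) :
    HasDerivAt (fun y => ∫ s in Ioo y b, H s) (-H x) x := by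
  have hint : IntervalIntegrable H volume x b :=
    (intervalIntegrable_iff_integrableOn_Ioo_of_le hx.2.le).2
      (hH.mono_set (Ioo_subset_Ioo_left hx.1.le))
  refine (intervalIntegral.integral_hasDerivAt_left hint
    (hHc.stronglyMeasurableAtFilter isOpen_Ioo x hx)
    (hHc.continuousAt (isOpen_Ioo.mem_nhds hx))).congr_of_eventuallyEq ?_
  filter_upwards [Iio_mem_nhds hx.2] with y hy
  rw [intervalIntegral.integral_of_le (le_of_lt hy), integral_Ioc_eq_integral_Ioo]

theorem strictAntiOn_Ioo_of_hasDerivAt_neg {g g' : ℝ → ℝ} {a b : ℝ}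
    (hg : ∀ x ∈ Ioo a b, HasDerivAt g (g' x) x) (hg' : ∀ x ∈ Ioo a b, g' x < 0) :
    StrictAntiOn g (Ioo a b) :=
  strictAntiOn_of_hasDerivWithinAt_neg (convex_Ioo a b)
    (fun x hx => (hg x hx).continuousAt.continuousWithinAt)
    (by simpa only [interior_Ioo] using fun x hx => (hg x hx).hasDerivWithinAt)
    (by simpa only [interior_Ioo] using hg')

theorem le_inv_setIntegral_div_of_le_inv_mul {F G : ℝ → ℝ} {a b c : ℝ} (hab : a < b) (hc : 0 < c)
    (hF : IntegrableOn F (Ioo a b)) (hGm : AEStronglyMeasurable G (volume.restrict (Ioo a b)))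
    (hG : ∀ t ∈ Ioo a b, 0 < G t) (hGF : ∀ t ∈ Ioo a b, G t ≤ c⁻¹ * F t) :
    c ≤ ((∫ t in Ioo a b, G t) / ∫ t in Ioo a b, F t)⁻¹ := by
  have hGi : IntegrableOn G (Ioo a b) := by
    refine (hF.const_mul c⁻¹).mono' hGm ?_
    filter_upwards [ae_restrict_mem measurableSet_Ioo] with t ht
    rw [Real.norm_of_nonneg (hG t ht).le]
    exact hGF t ht
  have hGle : ∫ t in Ioo a b, G t ≤ c⁻¹ * ∫ t in Ioo a b, F t := by
    rw [← integral_const_mul]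
    exact setIntegral_mono_on hGi (hF.const_mul c⁻¹) measurableSet_Ioo hGF
  rw [inv_div, le_div_iff₀ (setIntegral_Ioo_pos hab hGi hG)]
  calc c * ∫ t in Ioo a b, G t ≤ c * (c⁻¹ * ∫ t in Ioo a b, F t) := by gcongr
    _ = ∫ t in Ioo a b, F t := by field_simp

theorem stmt12_general (p pstar D ξ : ℝ) (hp : 1 < p) (hconj : 1/p + 1/pstar = 1)
    (hξ : 0 < ξ)
    (u v f : ℝ → ℝ)
    (hu : ∀ x ∈ Ioo (0:ℝ) D, 0 < u x) (hv : ∀ x ∈ Ioo (0:ℝ) D, 0 < v x)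
    (huI : ∀ x ∈ Ioo (0:ℝ) D, IntegrableOn u (Ioo 0 x))
    (hf : ContinuousOn f (Icc 0 D)) (hfpos : ∀ x ∈ Ioo (0:ℝ) D, 0 < f x)
    (hξI : ∀ x ∈ Ioo (0:ℝ) D,
      ξ ≤ (f x ^ (1 - p) *
        (∫ s in Ioo x D, v s ^ (1 - pstar) *
          (∫ t in Ioo 0 s, f t ^ (p - 1) * u t) ^ (pstar - 1)) ^ (p - 1))⁻¹)
    (hI : IntegrableOn (fun s => v s ^ (1 - pstar) *
      (∫ t in Ioo 0 s, f t ^ (p - 1) * u t) ^ (pstar - 1)) (Ioo 0 D))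
    (hC : ContinuousOn (fun s => v s ^ (1 - pstar) *
      (∫ t in Ioo 0 s, f t ^ (p - 1) * u t) ^ (pstar - 1)) (Ioo 0 D))
    (g : ℝ → ℝ)
    (hg : ∀ x, g x = ∫ s in Ioo x D, v s ^ (1 - pstar) *
      (∫ t in Ioo 0 s, f t ^ (p - 1) * u t) ^ (pstar - 1)) :
    (∀ x ∈ Ioo (0:ℝ) D, 0 < g x) ∧ StrictAntiOn g (Ioo 0 D) ∧
    ∃ g' : ℝ → ℝ, (∀ x ∈ Ioo (0:ℝ) D, HasDerivAt g (g' x) x) ∧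
      (∀ x ∈ Ioo (0:ℝ) D,
        v x * (-(g' x)) ^ (p - 1) = ∫ t in Ioo 0 x, f t ^ (p - 1) * u t) ∧
      (∀ x ∈ Ioo (0:ℝ) D,
        ξ ≤ ((∫ t in Ioo 0 x, g t ^ (p - 1) * u t) / (v x * (-(g' x)) ^ (p - 1)))⁻¹) := by
  have hpq : p.HolderConjugate pstar :=
    Real.holderConjugate_iff.mpr ⟨hp, by simpa only [one_div] using hconj⟩
  set F : ℝ → ℝ := fun t => f t ^ (p - 1) * u t
  set H : ℝ → ℝ := fun s => v s ^ (1 - pstar) * (∫ t in Ioo 0 s, F t) ^ (pstar - 1)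
  have hsub : ∀ x ∈ Ioo (0:ℝ) D, Ioo 0 x ⊆ Ioo 0 D := fun x hx => Ioo_subset_Ioo_right hx.2.le
  have hFint : ∀ x ∈ Ioo 0 D, IntegrableOn F (Ioo 0 x) := fun x hx =>
    IntegrableOn.continuousOn_mul_of_subset (hf.rpow_const fun _ _ => Or.inr hpq.sub_one_pos.le)
      (huI x hx) isCompact_Icc measurableSet_Ioo
      ((hsub x hx).trans Ioo_subset_Icc_self)
  have hFpos : ∀ x ∈ Ioo 0 D, 0 < ∫ t in Ioo 0 x, F t := fun x hx =>
    setIntegral_Ioo_pos hx.1 (hFint x hx) fun t ht =>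
      mul_pos (Real.rpow_pos_of_pos (hfpos t (hsub x hx ht)) _) (hu t (hsub x hx ht))
  have hHpos : ∀ s ∈ Ioo 0 D, 0 < H s := fun s hs =>
    mul_pos (Real.rpow_pos_of_pos (hv s hs) _) (Real.rpow_pos_of_pos (hFpos s hs) _)
  have hderiv : ∀ x ∈ Ioo 0 D, HasDerivAt g (-H x) x := fun x hx =>
    (funext hg : g = _) ▸ hasDerivAt_setIntegral_Ioo_left hI hC hx
  have hgpos : ∀ x ∈ Ioo 0 D, 0 < g x := fun x hx =>
    hg x ▸ setIntegral_Ioo_pos hx.2 (hI.mono_set (Ioo_subset_Ioo_left hx.1.le))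
      fun s hs => hHpos s ⟨hx.1.trans hs.1, hs.2⟩
  have hflux : ∀ x ∈ Ioo 0 D, v x * (-(-H x)) ^ (p - 1) = ∫ t in Ioo 0 x, F t := fun x hx => by
    rw [neg_neg]
    exact hpq.mul_rpow_sub_one_eq (hv x hx) (hFpos x hx)
  have hcomp : ∀ t ∈ Ioo 0 D, g t ^ (p - 1) * u t ≤ ξ⁻¹ * F t := fun t ht => by
    have hII := le_inv_mul_rpow_of_le_inv hξ (hfpos t ht) (hg t ▸ hξI t ht)
    rw [← mul_assoc]
    exact mul_le_mul_of_nonneg_right hII (hu t ht).le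
  refine ⟨hgpos, strictAntiOn_Ioo_of_hasDerivAt_neg hderiv fun x hx => neg_neg_of_pos (hHpos x hx),
    fun x => -H x, hderiv, hflux, fun x hx => ?_⟩
  have hgc : ContinuousOn g (Ioo 0 x) := fun t ht =>
    (hderiv t (hsub x hx ht)).continuousAt.continuousWithinAt
  rw [hflux x hx]
  exact le_inv_setIntegral_div_of_le_inv_mul hx.1 hξ (hFint x hx)
    (((hgc.rpow_const fun _ _ => Or.inr hpq.sub_one_pos.le).aestronglyMeasurable
      measurableSet_Ioo).mul (huI x hx).aestronglyMeasurable)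
    (fun t ht => mul_pos (Real.rpow_pos_of_pos (hgpos t (hsub x hx ht)) _) (hu t (hsub x hx ht)))
    fun t ht => hcomp t (hsub x hx ht)

/-- From `f ∈ F_II` with `inf II(f)⁻¹ = ξ > 0`, the function `g = f·II(f)^(p*-1)` is
positive, strictly decreasing, satisfies `v(−g')^(p-1) = ∫_0^x f^(p-1) dμ`, and
`I(g)(x)⁻¹ ≥ ξ` for all `x`. -/
theorem stmt12 (p pstar D ξ : ℝ) (hp : 1 < p) (hconj : 1/p + 1/pstar = 1)
    (hD : 0 < D) (hξ : 0 < ξ)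
    (u v f : ℝ → ℝ)
    (hu : ∀ x ∈ Ioo (0:ℝ) D, 0 < u x) (hv : ∀ x ∈ Ioo (0:ℝ) D, 0 < v x)
    (huI : ∀ x ∈ Ioo (0:ℝ) D, IntegrableOn u (Ioo 0 x))
    (hf : ContinuousOn f (Icc 0 D)) (hfpos : ∀ x ∈ Ioo (0:ℝ) D, 0 < f x)
    (hξI : ∀ x ∈ Ioo (0:ℝ) D,
      ξ ≤ (f x ^ (1 - p) *
        (∫ s in Ioo x D, v s ^ (1 - pstar) *
          (∫ t in Ioo 0 s, f t ^ (p - 1) * u t) ^ (pstar - 1)) ^ (p - 1))⁻¹)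
    (hI : IntegrableOn (fun s => v s ^ (1 - pstar) *
      (∫ t in Ioo 0 s, f t ^ (p - 1) * u t) ^ (pstar - 1)) (Ioo 0 D))
    (hC : ContinuousOn (fun s => v s ^ (1 - pstar) *
      (∫ t in Ioo 0 s, f t ^ (p - 1) * u t) ^ (pstar - 1)) (Ioo 0 D))
    (g : ℝ → ℝ)
    (hg : ∀ x, g x = ∫ s in Ioo x D, v s ^ (1 - pstar) *
      (∫ t in Ioo 0 s, f t ^ (p - 1) * u t) ^ (pstar - 1)) :
    (∀ x ∈ Ioo (0:ℝ) D, 0 < g x) ∧ StrictAntiOn g (Ioo 0 D) ∧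
    ∃ g' : ℝ → ℝ, (∀ x ∈ Ioo (0:ℝ) D, HasDerivAt g (g' x) x) ∧
      (∀ x ∈ Ioo (0:ℝ) D,
        v x * (-(g' x)) ^ (p - 1) = ∫ t in Ioo 0 x, f t ^ (p - 1) * u t) ∧
      (∀ x ∈ Ioo (0:ℝ) D,
        ξ ≤ ((∫ t in Ioo 0 x, g t ^ (p - 1) * u t) / (v x * (-(g' x)) ^ (p - 1)))⁻¹) :=
  stmt12_general p pstar D ξ hp hconj hξ u v f hu hv huI hf hfpos hξI hI hC g hg
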